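/- Let $\theta\in H^1(Y^*)$ be $L$-periodic in $y$ with trace $\theta\in L^2(\partial Y^*)$, extended periodically to the band $Y$, and let $w_0^{(3)}\in L^\infty(0,1)$. Define $H^\epsilon(x_1,x_2) = -\theta(x_1/\epsilon,x_2/\epsilon)\,w_0^{(3)}(x_1)$ on $\partial R^\epsilon$. Then, assuming $1/(\epsilon L)\in\mathbb{N}$, $\|H^\epsilon N_1^\epsilon\|_{L^2(\partial R^\epsilon)}^2 \le \frac{K_1}{L}\|\theta\|_{L^2(\partial Y^*)}^2$ with $K_1 = \|(1+(g')^2)^{1/2}\|_{L^\infty(0,L)}\|w_0^{(3)}\|_{L^\infty(0,1)}^2$ independent of $\epsilon$; the integral over the lateral boundary of $R^\epsilon$ contributes a bounded amount by periodicity of $\theta$. -/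

import Mathlib

/-!
On the oscillating top the normal component satisfies `(N₁ᵉ)² ≤ 1`, so the integrand is at most
`‖w₀‖²_∞ θ(x/ε, g(x/ε))² √(1 + g'(x/ε)²)`, an `εL`-periodic function of `x`. Since `(0, 1)` is
made of exactly `n = 1/(εL)` cells, its integral is the mean over one cell, `1/L` times the
top part of `‖θ‖²_{L²(∂Y*)}`. On the bottom `N₁ᵉ = 0`. The lateral pieces are the lateral trace
of `θ` on one cell rescaled by `ε ≤ 1/L`; the right one is the left one by periodicity.
-/

open MeasureTheory Set Real

theorem Function.Periodic.deriv {f : ℝ → ℝ} {T : ℝ} (hf : Function.Periodic f T) :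
    Function.Periodic (deriv f) T := fun x => by
  rw [← deriv_comp_add_const, hf.funext]

theorem one_le_sqrt_one_add_sq (d : ℝ) : 1 ≤ √(1 + d ^ 2) :=
  one_le_sqrt.2 (le_add_of_nonneg_right (sq_nonneg d))

theorem sq_div_sqrt_one_add_sq_le_one (d : ℝ) : (d / √(1 + d ^ 2)) ^ 2 ≤ 1 := by
  rw [div_pow, sq_sqrt (by positivity), div_le_one (by positivity)]
  linarith

theorem mul_sq_le_sq_mul_sq {a w M : ℝ} (h : |w| ≤ M) : (a * w) ^ 2 ≤ M ^ 2 * a ^ 2 := by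
  rw [mul_pow, mul_comm, ← sq_abs w]
  gcongr

theorem sq_mul_div_sqrt_one_add_sq_mul_sqrt_le {a w d M : ℝ} (h : |w| ≤ M) :
    (a * w * (d / √(1 + d ^ 2))) ^ 2 * √(1 + d ^ 2) ≤ M ^ 2 * (a ^ 2 * √(1 + d ^ 2)) :=
  calc (a * w * (d / √(1 + d ^ 2))) ^ 2 * √(1 + d ^ 2)
      = (a * w) ^ 2 * (d / √(1 + d ^ 2)) ^ 2 * √(1 + d ^ 2) := by ring
    _ ≤ (a * w) ^ 2 * 1 * √(1 + d ^ 2) := by gcongr; exact sq_div_sqrt_one_add_sq_le_one d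
    _ ≤ M ^ 2 * a ^ 2 * √(1 + d ^ 2) := by rw [mul_one]; gcongr; exact mul_sq_le_sq_mul_sq h
    _ = M ^ 2 * (a ^ 2 * √(1 + d ^ 2)) := mul_assoc _ _ _

theorem setIntegral_le_const_mul_of_le {α : Type*} [MeasurableSpace α] {μ : Measure α}
    {s : Set α} {f h : α → ℝ} {c : ℝ} (hs : MeasurableSet s) (hh : IntegrableOn h s μ)
    (hf : ∀ x ∈ s, 0 ≤ f x) (hfh : ∀ x ∈ s, f x ≤ c * h x) :
    ∫ x in s, f x ∂μ ≤ c * ∫ x in s, h x ∂μ := by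
  rw [← integral_const_mul]
  exact integral_mono_of_nonneg ((ae_restrict_iff' hs).2 (.of_forall hf)) (hh.const_mul c)
    ((ae_restrict_iff' hs).2 (.of_forall hfh))

section Rescaling

variable {E : Type*} [NormedAddCommGroup E] [NormedSpace ℝ E]

theorem setIntegral_Ioo_mul_comp_div (f : ℝ → E) {ε : ℝ} (hε : 0 < ε) (a b : ℝ) :
    ∫ t in Ioo (ε * a) (ε * b), f (t / ε) = ε • ∫ z in Ioo a b, f z := by
  have h := Measure.setIntegral_comp_smul_of_pos volume f (Ioo (ε * a) (ε * b)) (inv_pos.2 hε)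
  rw [LinearOrderedField.smul_Ioo (inv_pos.2 hε)] at h
  simpa [inv_mul_cancel_left₀ hε.ne', div_eq_inv_mul] using h

theorem Function.Periodic.setIntegral_Ioo_comp_div_of_mul_nat_eq_one {f : ℝ → E} {T ε : ℝ}
    (hf : Function.Periodic f T) (hT : 0 < T) (hfi : IntegrableOn f (Ioo 0 T)) {n : ℕ}
    (hn : ε * T * n = 1) :
    IntegrableOn (fun x => f (x / ε)) (Ioo 0 1) ∧
      ∫ x in Ioo 0 1, f (x / ε) = T⁻¹ • ∫ x in Ioo 0 T, f x := by
  have hε : ε ≠ 0 := by rintro rfl; simp at hn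
  have hinv : ε⁻¹ = (n : ℤ) • T := by
    rw [zsmul_eq_mul, Int.cast_natCast]; field_simp; linarith
  have hint := hf.intervalIntegrable₀ hT.ne'
    ((intervalIntegrable_iff_integrableOn_Ioo_of_le hT.le).2 hfi)
  have hcomp : IntervalIntegrable (fun x => f (x / ε)) volume 0 1 := by
    simpa [div_eq_mul_inv, hε] using (hint 0 ε⁻¹).comp_mul_right (c := ε⁻¹)
  refine ⟨(intervalIntegrable_iff_integrableOn_Ioo_of_le zero_le_one).1 hcomp, ?_⟩
  rw [← integral_Ioc_eq_integral_Ioo, ← integral_Ioc_eq_integral_Ioo,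
    ← intervalIntegral.integral_of_le zero_le_one, ← intervalIntegral.integral_of_le hT.le]
  have hcells := hf.intervalIntegral_add_zsmul_eq n 0 hint
  rw [zero_add, zero_add] at hcells
  rw [intervalIntegral.integral_comp_div f hε, zero_div, one_div, hinv, hcells,
    ← Int.cast_smul_eq_zsmul ℝ, smul_smul]
  congr 1
  field_simp
  linear_combination hn

end Rescaling

theorem setIntegral_oscillating_top_le {a d w : ℝ → ℝ} {T ε M : ℝ} {n : ℕ}
    (ha : Function.Periodic a T) (hd : Function.Periodic d T) (hT : 0 < T)
    (hn : ε * T * n = 1) (hw : ∀ x ∈ Ioo (0:ℝ) 1, |w x| ≤ M)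
    (hi : IntegrableOn (fun y => a y ^ 2 * √(1 + d y ^ 2)) (Ioo 0 T)) :
    ∫ x in Ioo (0:ℝ) 1,
        (a (x / ε) * w x * (d (x / ε) / √(1 + d (x / ε) ^ 2))) ^ 2 * √(1 + d (x / ε) ^ 2) ≤
      M ^ 2 * (T⁻¹ * ∫ y in Ioo 0 T, a y ^ 2 * √(1 + d y ^ 2)) := by
  have hper : Function.Periodic (fun y => a y ^ 2 * √(1 + d y ^ 2)) T := fun y => by
    simp only [ha y, hd y]
  obtain ⟨hint, hmean⟩ := hper.setIntegral_Ioo_comp_div_of_mul_nat_eq_one hT hi hn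
  rw [← smul_eq_mul T⁻¹, ← hmean]
  exact setIntegral_le_const_mul_of_le measurableSet_Ioo hint (fun _ _ => by positivity)
    fun x hx => sq_mul_div_sqrt_one_add_sq_mul_sqrt_le (hw x hx)

theorem setIntegral_Ioo_sq_mul_comp_div_le {f : ℝ → ℝ} {ε c M a : ℝ} (hε : 0 < ε)
    (hc : |c| ≤ M) (hf : IntegrableOn (fun z => f z ^ 2) (Ioo 0 a)) :
    ∫ t in Ioo 0 (ε * a), (f (t / ε) * c) ^ 2 ≤ ε * (M ^ 2 * ∫ z in Ioo 0 a, f z ^ 2) := by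
  have h := setIntegral_Ioo_mul_comp_div (fun z => (f z * c) ^ 2) hε 0 a
  rw [mul_zero, smul_eq_mul] at h
  rw [h]
  gcongr
  exact setIntegral_le_const_mul_of_le measurableSet_Ioo hf (fun _ _ => sq_nonneg _)
    fun _ _ => mul_sq_le_sq_mul_sq hc

theorem boundary_estimate_H_general (L ε : ℝ) (hL : 0 < L) (hε : 0 < ε)
    (g : ℝ → ℝ) (hgper : Function.Periodic g L)
    (θ : ℝ × ℝ → ℝ)
    (hθper : ∀ y z : ℝ, θ (y + L, z) = θ (y, z))
    (w3 : ℝ → ℝ) (M3 Ksq : ℝ)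
    (hM3 : ∀ x ∈ Icc (0:ℝ) 1, |w3 x| ≤ M3)
    (hKsq : ∀ y : ℝ, Real.sqrt (1 + (deriv g y) ^ 2) ≤ Ksq)
    (n : ℕ) (hn : 0 < n) (hcell : ε * L * n = 1)
    -- trace of θ is square integrable on ∂Y*
    (htop : IntegrableOn (fun y => (θ (y, g y)) ^ 2 * Real.sqrt (1 + (deriv g y) ^ 2)) (Ioo 0 L))
    (hlat : IntegrableOn (fun z => (θ (0, z)) ^ 2) (Ioo 0 (g 0))) :
    -- ‖Hᵉ N₁ᵉ‖² over the oscillatory, fixed and lateral parts of ∂Rᵉ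
    ((∫ x in Ioo (0:ℝ) 1,
        (θ (x / ε, g (x / ε)) * w3 x *
          (deriv g (x / ε) / Real.sqrt (1 + (deriv g (x / ε)) ^ 2))) ^ 2 *
          Real.sqrt (1 + (deriv g (x / ε)) ^ 2)) +
      (∫ x in Ioo (0:ℝ) 1, (θ (x / ε, 0) * w3 x * 0) ^ 2) +
      (∫ t in Ioo 0 (ε * g 0), (θ (0, t / ε) * w3 0) ^ 2) +
      (∫ t in Ioo 0 (ε * g (1 / ε)), (θ (1 / ε, t / ε) * w3 1) ^ 2)) ≤
    (Ksq * M3 ^ 2 / L) *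
      ((∫ y in Ioo 0 L, (θ (y, g y)) ^ 2 * Real.sqrt (1 + (deriv g y) ^ 2)) +
       (∫ y in Ioo 0 L, (θ (y, 0)) ^ 2) +
       (∫ z in Ioo 0 (g 0), (θ (0, z)) ^ 2) +
       (∫ z in Ioo 0 (g L), (θ (L, z)) ^ 2)) := by
  have hθper' (z : ℝ) : Function.Periodic (fun y => θ (y, z)) L := fun y => hθper y z
  have hend : 1 / ε = n * L := by field_simp; linear_combination -hcell
  have htop_le := setIntegral_oscillating_top_le (fun y => by simp only [hgper y, hθper])
    hgper.deriv hL hcell (fun x hx => hM3 x (Ioo_subset_Icc_self hx)) htop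
  have hleft := setIntegral_Ioo_sq_mul_comp_div_le hε (hM3 0 (left_mem_Icc.2 zero_le_one)) hlat
  have hright := setIntegral_Ioo_sq_mul_comp_div_le hε (hM3 1 (right_mem_Icc.2 zero_le_one)) hlat
  have hθ_end (z : ℝ) : θ (n * L, z) = θ (0, z) := (hθper' z).nat_mul_eq n
  have hθ_L (z : ℝ) : θ (L, z) = θ (0, z) := (hθper' z).eq
  have hbottom : ∫ x in Ioo (0:ℝ) 1, (θ (x / ε, 0) * w3 x * 0) ^ 2 = 0 := by simp
  rw [hbottom, hend, hgper.nat_mul_eq, hgper.eq]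
  simp_rw [hθ_end, hθ_L]
  have hεL : ε ≤ L⁻¹ := by
    rw [← one_div, le_div_iff₀ hL]
    calc ε * L ≤ ε * L * n := le_mul_of_one_le_right (by positivity) (Nat.one_le_cast.2 hn)
      _ = 1 := hcell
  have hK : 1 ≤ Ksq := (one_le_sqrt_one_add_sq _).trans (hKsq 0)
  have hcoef_top : M3 ^ 2 * L⁻¹ ≤ Ksq * M3 ^ 2 / L := by
    rw [div_eq_mul_inv]; gcongr; exact le_mul_of_one_le_left (sq_nonneg _) hK
  have hcoef_lat : ε * M3 ^ 2 ≤ Ksq * M3 ^ 2 / L :=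
    calc ε * M3 ^ 2 ≤ L⁻¹ * M3 ^ 2 := by gcongr
      _ ≤ Ksq * L⁻¹ * M3 ^ 2 := by gcongr; exact le_mul_of_one_le_left (by positivity) hK
      _ = Ksq * M3 ^ 2 / L := by ring
  have hcoef : 0 ≤ Ksq * M3 ^ 2 / L := (mul_nonneg hε.le (sq_nonneg _)).trans hcoef_lat
  have hA : 0 ≤ ∫ y in Ioo 0 L, θ (y, g y) ^ 2 * √(1 + deriv g y ^ 2) :=
    setIntegral_nonneg measurableSet_Ioo fun _ _ => by positivity
  have hB : 0 ≤ ∫ y in Ioo 0 L, θ (y, 0) ^ 2 :=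
    setIntegral_nonneg measurableSet_Ioo fun _ _ => sq_nonneg _
  have hC : 0 ≤ ∫ z in Ioo 0 (g 0), θ (0, z) ^ 2 :=
    setIntegral_nonneg measurableSet_Ioo fun _ _ => sq_nonneg _
  linarith [mul_le_mul_of_nonneg_right hcoef_top hA, mul_le_mul_of_nonneg_right hcoef_lat hC,
    mul_nonneg hcoef hB]

/-- Boundary estimate for `Hᵉ = -θ(·/ε) w₀'''`:
`‖Hᵉ N₁ᵉ‖²_{L²(∂Rᵉ)} ≤ (K₁/L) ‖θ‖²_{L²(∂Y*)}` with
`K₁ = ‖(1+g'²)^{1/2}‖_∞ ‖w₀'''‖²_∞` independent of `ε`; the boundary of `Rᵉ`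
consists of the oscillatory top (with surface element `√(1+g'(x/ε)²) dx` and
`N₁ = g'/√(1+g'²)`), the bottom (where `N₁ = 0`), and the lateral parts
(where `N₁² = 1`), whose contribution is controlled by periodicity of `θ`. -/
theorem boundary_estimate_H (L ε : ℝ) (hL : 0 < L) (hε : 0 < ε)
    (g : ℝ → ℝ) (hg : ContDiff ℝ 1 g) (hgper : Function.Periodic g L)
    (hgpos : ∀ y, 0 < g y)
    (θ : ℝ × ℝ → ℝ) (hθm : Measurable θ)
    (hθper : ∀ y z : ℝ, θ (y + L, z) = θ (y, z))
    (w3 : ℝ → ℝ) (M3 Ksq : ℝ)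
    (hM3 : ∀ x ∈ Icc (0:ℝ) 1, |w3 x| ≤ M3)
    (hKsq : ∀ y : ℝ, Real.sqrt (1 + (deriv g y) ^ 2) ≤ Ksq)
    (n : ℕ) (hn : 0 < n) (hcell : ε * L * n = 1)
    -- trace of θ is square integrable on ∂Y*
    (htop : IntegrableOn (fun y => (θ (y, g y)) ^ 2 * Real.sqrt (1 + (deriv g y) ^ 2)) (Ioo 0 L))
    (hbot : IntegrableOn (fun y => (θ (y, 0)) ^ 2) (Ioo 0 L))
    (hlat : IntegrableOn (fun z => (θ (0, z)) ^ 2) (Ioo 0 (g 0))) :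
    -- ‖Hᵉ N₁ᵉ‖² over the oscillatory, fixed and lateral parts of ∂Rᵉ
    ((∫ x in Ioo (0:ℝ) 1,
        (θ (x / ε, g (x / ε)) * w3 x *
          (deriv g (x / ε) / Real.sqrt (1 + (deriv g (x / ε)) ^ 2))) ^ 2 *
          Real.sqrt (1 + (deriv g (x / ε)) ^ 2)) +
      (∫ x in Ioo (0:ℝ) 1, (θ (x / ε, 0) * w3 x * 0) ^ 2) +
      (∫ t in Ioo 0 (ε * g 0), (θ (0, t / ε) * w3 0) ^ 2) +
      (∫ t in Ioo 0 (ε * g (1 / ε)), (θ (1 / ε, t / ε) * w3 1) ^ 2)) ≤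
    (Ksq * M3 ^ 2 / L) *
      ((∫ y in Ioo 0 L, (θ (y, g y)) ^ 2 * Real.sqrt (1 + (deriv g y) ^ 2)) +
       (∫ y in Ioo 0 L, (θ (y, 0)) ^ 2) +
       (∫ z in Ioo 0 (g 0), (θ (0, z)) ^ 2) +
       (∫ z in Ioo 0 (g L), (θ (L, z)) ^ 2)) :=
  boundary_estimate_H_general L ε hL hε g hgper θ hθper w3 M3 Ksq hM3 hKsq n hn hcell htop hlat
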